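/- arXiv:1202.2089 — 6 statements merged into one kernel-verified Lean document; each statement's English description precedes it below -/
import Mathlib

section
/- If μ₁ and μ₂ are probability measures on {1,...,L_max} with μ₁ first-order stochastically dominated by μ₂ (i.e., Σ_{j≥l} μ₁(j) ≤ Σ_{j≥l} μ₂(j) for all l), then the corresponding mean-field equilibrium sequences satisfy r_{μ₁}(k) ≥ r_{μ₂}(k) for all k ∈ ℕ, where r_μ(0)=1 and r_μ(k)=λ·u_μ(r_μ(k-1)) with u_μ(x)=Σ_l x^l μ(l) and 0<λ<1. -/
/-!
Both sequences stay in `[0, 1]`, where `u_μ` is monotone. For `x ∈ [0, 1]` the weights `l ↦ x^l`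
decrease, so by Abel summation stochastic dominance gives `u_{μ₂}(x) ≤ u_{μ₁}(x)`. Induction on `k`
then yields `r₂ (k+1) = λ u_{μ₂}(r₂ k) ≤ λ u_{μ₂}(r₁ k) ≤ λ u_{μ₁}(r₁ k) = r₁ (k+1)`.
-/

open Finset

/-- The paper's `u_μ`. -/
def genFun (μ : ℕ → ℝ) (L : ℕ) (x : ℝ) : ℝ := ∑ l ∈ Icc 1 L, x ^ l * μ l

/-- Abel summation, by downward induction on `a`. -/
lemma sum_Icc_mul_le_mul_sum_Icc {f D : ℕ → ℝ} {L : ℕ} (hf : Antitone f)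
    (hD : ∀ a ∈ Icc 1 L, 0 ≤ ∑ j ∈ Icc a L, D j) (a : ℕ) :
    ∑ l ∈ Icc a L, f l * D l ≤ f a * ∑ l ∈ Icc a L, D l := by
  induction h : L + 1 - a generalizing a with
  | zero => simp [Icc_eq_empty_of_lt (show L < a by omega)]
  | succ n ih =>
    have hsplit (g : ℕ → ℝ) : ∑ l ∈ Icc a L, g l = g a + ∑ l ∈ Icc (a + 1) L, g l := by
      rw [Icc_add_one_left_eq_Ioc, add_comm, sum_Ioc_add_eq_sum_Icc (by omega)]
    have htail : 0 ≤ ∑ l ∈ Icc (a + 1) L, D l := by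
      by_cases ha : a + 1 ≤ L
      · exact hD (a + 1) (mem_Icc.mpr ⟨by omega, ha⟩)
      · simp [Icc_eq_empty_of_lt (show L < a + 1 by omega)]
    calc ∑ l ∈ Icc a L, f l * D l
        = f a * D a + ∑ l ∈ Icc (a + 1) L, f l * D l := hsplit _
      _ ≤ f a * D a + f (a + 1) * ∑ l ∈ Icc (a + 1) L, D l := by gcongr; exact ih _ (by omega)
      _ ≤ f a * D a + f a * ∑ l ∈ Icc (a + 1) L, D l := by
          gcongr; exact hf (Nat.le_succ a)
      _ = f a * ∑ l ∈ Icc a L, D l := by rw [hsplit, mul_add]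

lemma sum_Icc_mul_le_of_tail_le {f μ₁ μ₂ : ℕ → ℝ} {L : ℕ} (hf : Antitone f)
    (hmass : ∑ l ∈ Icc 1 L, μ₁ l = ∑ l ∈ Icc 1 L, μ₂ l)
    (hdom : ∀ a ∈ Icc 1 L, ∑ j ∈ Icc a L, μ₁ j ≤ ∑ j ∈ Icc a L, μ₂ j) :
    ∑ l ∈ Icc 1 L, f l * μ₂ l ≤ ∑ l ∈ Icc 1 L, f l * μ₁ l := by
  have key := sum_Icc_mul_le_mul_sum_Icc hf (D := fun l ↦ μ₂ l - μ₁ l)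
    (fun a ha ↦ by simpa [sum_sub_distrib] using hdom a ha) 1
  simp only [mul_sub, sum_sub_distrib, hmass, sub_self, mul_zero] at key
  linarith

section genFun

variable {μ : ℕ → ℝ} {L : ℕ}

lemma genFun_nonneg (hμ : ∀ l, 0 ≤ μ l) {x : ℝ} (hx : 0 ≤ x) : 0 ≤ genFun μ L x :=
  sum_nonneg fun l _ ↦ mul_nonneg (pow_nonneg hx l) (hμ l)

lemma genFun_le_one (hμ : ∀ l, 0 ≤ μ l) (hμ1 : ∑ l ∈ Icc 1 L, μ l = 1) {x : ℝ} (hx0 : 0 ≤ x)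
    (hx1 : x ≤ 1) : genFun μ L x ≤ 1 :=
  calc genFun μ L x ≤ ∑ l ∈ Icc 1 L, μ l :=
        sum_le_sum fun l _ ↦ mul_le_of_le_one_left (hμ l) (pow_le_one₀ hx0 hx1)
    _ = 1 := hμ1

lemma genFun_mono (hμ : ∀ l, 0 ≤ μ l) {x y : ℝ} (hx : 0 ≤ x) (hxy : x ≤ y) :
    genFun μ L x ≤ genFun μ L y :=
  sum_le_sum fun l _ ↦ mul_le_mul_of_nonneg_right (pow_le_pow_left₀ hx hxy l) (hμ l)

lemma genFun_le_of_tail_le {μ₁ μ₂ : ℕ → ℝ}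
    (hmass : ∑ l ∈ Icc 1 L, μ₁ l = ∑ l ∈ Icc 1 L, μ₂ l)
    (hdom : ∀ a ∈ Icc 1 L, ∑ j ∈ Icc a L, μ₁ j ≤ ∑ j ∈ Icc a L, μ₂ j)
    {x : ℝ} (hx0 : 0 ≤ x) (hx1 : x ≤ 1) : genFun μ₂ L x ≤ genFun μ₁ L x :=
  sum_Icc_mul_le_of_tail_le (pow_right_anti₀ hx0 hx1) hmass hdom

lemma iterate_genFun_mem_Icc {lam : ℝ} (hlam0 : 0 ≤ lam) (hlam1 : lam ≤ 1)
    (hμ : ∀ l, 0 ≤ μ l) (hμ1 : ∑ l ∈ Icc 1 L, μ l = 1) {r : ℕ → ℝ} (hr0 : r 0 = 1)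
    (hrec : ∀ k, r (k + 1) = lam * genFun μ L (r k)) (k : ℕ) : r k ∈ Set.Icc 0 1 := by
  induction k with
  | zero => simp [hr0]
  | succ k ih =>
    rw [hrec]
    exact ⟨mul_nonneg hlam0 (genFun_nonneg hμ ih.1),
      mul_le_one₀ hlam1 (genFun_nonneg hμ ih.1) (genFun_le_one hμ hμ1 ih.1 ih.2)⟩

end genFun

theorem stmt_1_general (lam : ℝ) (hlam0 : 0 < lam) (hlam1 : lam < 1)
    (Lmax : ℕ)
    (μ₁ μ₂ : ℕ → ℝ)
    (hμ₁0 : ∀ l, 0 ≤ μ₁ l) (hμ₁1 : ∑ l ∈ Finset.Icc 1 Lmax, μ₁ l = 1)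
    (hμ₂0 : ∀ l, 0 ≤ μ₂ l) (hμ₂1 : ∑ l ∈ Finset.Icc 1 Lmax, μ₂ l = 1)
    (hdom : ∀ l ∈ Finset.Icc 1 Lmax,
      ∑ j ∈ Finset.Icc l Lmax, μ₁ j ≤ ∑ j ∈ Finset.Icc l Lmax, μ₂ j)
    (r₁ r₂ : ℕ → ℝ) (hr₁0 : r₁ 0 = 1) (hr₂0 : r₂ 0 = 1)
    (hrec₁ : ∀ k, r₁ (k + 1) = lam * ∑ l ∈ Finset.Icc 1 Lmax, (r₁ k) ^ l * μ₁ l)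
    (hrec₂ : ∀ k, r₂ (k + 1) = lam * ∑ l ∈ Finset.Icc 1 Lmax, (r₂ k) ^ l * μ₂ l) :
    ∀ k, r₂ k ≤ r₁ k := by
  have hr₁ := iterate_genFun_mem_Icc hlam0.le hlam1.le hμ₁0 hμ₁1 hr₁0 hrec₁
  have hr₂ := iterate_genFun_mem_Icc hlam0.le hlam1.le hμ₂0 hμ₂1 hr₂0 hrec₂
  intro k
  induction k with
  | zero => rw [hr₁0, hr₂0]
  | succ k ih =>
    rw [hrec₁, hrec₂]
    gcongr lam * ?_
    calc genFun μ₂ Lmax (r₂ k) ≤ genFun μ₂ Lmax (r₁ k) := genFun_mono hμ₂0 (hr₂ k).1 ih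
      _ ≤ genFun μ₁ Lmax (r₁ k) :=
        genFun_le_of_tail_le (hμ₁1.trans hμ₂1.symm) hdom (hr₁ k).1 (hr₁ k).2

/-- Stochastic dominance μ₁ ≤_st μ₂ implies r_{μ₁}(k) ≥ r_{μ₂}(k) for all k. -/
theorem stmt_1 (lam : ℝ) (hlam0 : 0 < lam) (hlam1 : lam < 1)
    (Lmax : ℕ) (hL : 1 ≤ Lmax)
    (μ₁ μ₂ : ℕ → ℝ)
    (hμ₁0 : ∀ l, 0 ≤ μ₁ l) (hμ₁1 : ∑ l ∈ Finset.Icc 1 Lmax, μ₁ l = 1)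
    (hμ₂0 : ∀ l, 0 ≤ μ₂ l) (hμ₂1 : ∑ l ∈ Finset.Icc 1 Lmax, μ₂ l = 1)
    (hdom : ∀ l ∈ Finset.Icc 1 Lmax,
      ∑ j ∈ Finset.Icc l Lmax, μ₁ j ≤ ∑ j ∈ Finset.Icc l Lmax, μ₂ j)
    (r₁ r₂ : ℕ → ℝ) (hr₁0 : r₁ 0 = 1) (hr₂0 : r₂ 0 = 1)
    (hrec₁ : ∀ k, r₁ (k + 1) = lam * ∑ l ∈ Finset.Icc 1 Lmax, (r₁ k) ^ l * μ₁ l)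
    (hrec₂ : ∀ k, r₂ (k + 1) = lam * ∑ l ∈ Finset.Icc 1 Lmax, (r₂ k) ^ l * μ₂ l) :
    ∀ k, r₂ k ≤ r₁ k :=
  stmt_1_general lam hlam0 hlam1 Lmax μ₁ μ₂ hμ₁0 hμ₁1 hμ₂0 hμ₂1 hdom r₁ r₂ hr₁0 hr₂0 hrec₁ hrec₂
end

section
/- If μ₁ <_st μ₂ strictly (μ₁ ≤_st μ₂ and μ₁ ≠ μ₂) and 0 < λ < 1, then u_{μ₁}(x) > u_{μ₂}(x) for all x ∈ (0,1), and consequently r_{μ₁}(k) > r_{μ₂}(k) for all k ≥ 2, where r_μ(0)=1 and r_μ(k)=λ·u_μ(r_μ(k-1)). -/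
/-!
Summation by parts writes `u_μ(x) = x · μ(≥1) + Σ_{l ≥ 2} (x^l - x^(l-1)) · μ(≥l)` in terms of the
tails `μ(≥l)`. For `0 < x < 1` the weights `x^l - x^(l-1)` are negative, so pushing mass to the right
(larger tails, same total mass) strictly lowers `u_μ(x)`. For the iterates, `r₁ 1 = r₂ 1 = λ`, and
inductively `r₂ (k+1) = λ u_{μ₂}(r₂ k) < λ u_{μ₁}(r₂ k) ≤ λ u_{μ₁}(r₁ k) = r₁ (k+1)` since `u_{μ₁}`
is monotone on `[0, ∞)`.
-/

open Finset

theorem Finset.sum_Icc_two_sub_pred {R : Type*} [AddCommGroup R] (f : ℕ → R) {M : ℕ}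
    (hM : 1 ≤ M) : ∑ l ∈ Icc 2 M, (f l - f (l - 1)) = f M - f 1 := by
  induction M, hM using Nat.le_induction with
  | base => simp
  | succ M hM ih =>
    rw [sum_Icc_succ_top (by omega), ih, Nat.add_sub_cancel]
    abel

theorem Finset.sum_Icc_mul_eq_add_sum_sub_mul_tail {R : Type*} [CommRing R] (f μ : ℕ → R)
    (L : ℕ) :
    ∑ l ∈ Icc 1 L, f l * μ l =
      f 1 * ∑ l ∈ Icc 1 L, μ l + ∑ l ∈ Icc 2 L, (f l - f (l - 1)) * ∑ j ∈ Icc l L, μ j := by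
  induction L with
  | zero => simp
  | succ L ih =>
    rcases Nat.eq_zero_or_pos L with rfl | hL
    · simp
    have htail : ∀ l ∈ Icc 2 (L + 1),
        (f l - f (l - 1)) * ∑ j ∈ Icc l (L + 1), μ j
          = (f l - f (l - 1)) * ∑ j ∈ Icc l L, μ j + (f l - f (l - 1)) * μ (L + 1) := by
      intro l hl
      rw [sum_Icc_succ_top (mem_Icc.mp hl).2, mul_add]
    rw [sum_Icc_succ_top (by omega), sum_Icc_succ_top (by omega), ih, sum_congr rfl htail,
      sum_add_distrib, ← sum_mul, sum_Icc_two_sub_pred f (by omega),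
      sum_Icc_succ_top (by omega : 2 ≤ L + 1), Icc_eq_empty (by omega : ¬L + 1 ≤ L)]
    simp only [sum_empty, mul_zero, add_zero]
    ring

theorem sum_pow_mul_lt_of_tail_le_of_tail_lt {x : ℝ} (hx0 : 0 < x) (hx1 : x < 1) {L : ℕ}
    {μ ν : ℕ → ℝ} (hsum : ∑ l ∈ Icc 1 L, μ l = ∑ l ∈ Icc 1 L, ν l)
    (hle : ∀ l ∈ Icc 1 L, ∑ j ∈ Icc l L, μ j ≤ ∑ j ∈ Icc l L, ν j)
    (hlt : ∃ l ∈ Icc 1 L, ∑ j ∈ Icc l L, μ j < ∑ j ∈ Icc l L, ν j) :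
    ∑ l ∈ Icc 1 L, x ^ l * ν l < ∑ l ∈ Icc 1 L, x ^ l * μ l := by
  rw [sum_Icc_mul_eq_add_sum_sub_mul_tail, sum_Icc_mul_eq_add_sum_sub_mul_tail, hsum,
    add_lt_add_iff_left]
  have hweight : ∀ l ∈ Icc 2 L, x ^ l - x ^ (l - 1) < 0 := fun l hl =>
    sub_neg.mpr (pow_lt_pow_right_of_lt_one₀ hx0 hx1 (by grind))
  apply sum_lt_sum
  · intro l hl
    exact mul_le_mul_of_nonpos_left (hle l (by grind)) (hweight l hl).le
  · obtain ⟨l, hl, hlt⟩ := hlt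
    -- the tail at `l = 1` is the total mass, on which `μ` and `ν` agree
    have hl2 : l ∈ Icc 2 L := by
      rcases mem_Icc.mp hl with ⟨h1, hL⟩
      rcases h1.eq_or_lt with rfl | h2
      · exact absurd hsum hlt.ne
      · exact mem_Icc.mpr ⟨h2, hL⟩
    exact ⟨l, hl2, mul_lt_mul_of_neg_left hlt (hweight l hl2)⟩

theorem sum_pow_mul_le_sum_pow_mul {a b : ℝ} (ha : 0 ≤ a) (hab : a ≤ b) {μ : ℕ → ℝ}
    (hμ : ∀ l, 0 ≤ μ l) (s : Finset ℕ) : ∑ l ∈ s, a ^ l * μ l ≤ ∑ l ∈ s, b ^ l * μ l := by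
  gcongr with l
  exact hμ l

theorem stmt_3_general (lam : ℝ) (hlam0 : 0 < lam)
    (Lmax : ℕ)
    (μ₁ μ₂ : ℕ → ℝ)
    (hμ₁0 : ∀ l, 0 ≤ μ₁ l) (hμ₁1 : ∑ l ∈ Finset.Icc 1 Lmax, μ₁ l = 1)
    (hμ₂1 : ∑ l ∈ Finset.Icc 1 Lmax, μ₂ l = 1)
    (hdom : ∀ l ∈ Finset.Icc 1 Lmax,
      ∑ j ∈ Finset.Icc l Lmax, μ₁ j ≤ ∑ j ∈ Finset.Icc l Lmax, μ₂ j)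
    (hstrict : ∃ l ∈ Finset.Icc 1 Lmax,
      ∑ j ∈ Finset.Icc l Lmax, μ₁ j < ∑ j ∈ Finset.Icc l Lmax, μ₂ j)
    (r₁ r₂ : ℕ → ℝ) (hr₁0 : r₁ 0 = 1) (hr₂0 : r₂ 0 = 1)
    (hrec₁ : ∀ k, r₁ (k + 1) = lam * ∑ l ∈ Finset.Icc 1 Lmax, (r₁ k) ^ l * μ₁ l)
    (hrec₂ : ∀ k, r₂ (k + 1) = lam * ∑ l ∈ Finset.Icc 1 Lmax, (r₂ k) ^ l * μ₂ l)
    (hr₂ : ∀ k, 1 ≤ k → 0 < r₂ k ∧ r₂ k < 1) :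
    (∀ x : ℝ, 0 < x → x < 1 →
      ∑ l ∈ Finset.Icc 1 Lmax, x ^ l * μ₂ l < ∑ l ∈ Finset.Icc 1 Lmax, x ^ l * μ₁ l) ∧
    (∀ k, 2 ≤ k → r₂ k < r₁ k) := by
  have hu : ∀ x : ℝ, 0 < x → x < 1 →
      ∑ l ∈ Icc 1 Lmax, x ^ l * μ₂ l < ∑ l ∈ Icc 1 Lmax, x ^ l * μ₁ l := fun x hx0 hx1 =>
    sum_pow_mul_lt_of_tail_le_of_tail_lt hx0 hx1 (hμ₁1.trans hμ₂1.symm) hdom hstrict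
  refine ⟨hu, ?_⟩
  have hr_one : r₂ 1 = r₁ 1 := by simp [hrec₁, hrec₂, hr₁0, hr₂0, hμ₁1, hμ₂1]
  have hstep : ∀ k, 1 ≤ k → r₂ k ≤ r₁ k → r₂ (k + 1) < r₁ (k + 1) := by
    intro k hk hle
    obtain ⟨h0, h1⟩ := hr₂ k hk
    rw [hrec₁, hrec₂]
    exact mul_lt_mul_of_pos_left
      ((hu _ h0 h1).trans_le (sum_pow_mul_le_sum_pow_mul h0.le hle hμ₁0 _)) hlam0
  intro k hk
  induction k, hk using Nat.le_induction with
  | base => exact hstep 1 le_rfl hr_one.le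
  | succ k hk ih => exact hstep k (by omega) ih.le

/-- Strict stochastic dominance μ₁ <_st μ₂ implies u_{μ₁}(x) > u_{μ₂}(x) on (0,1),
and consequently r_{μ₁}(k) > r_{μ₂}(k) for k ≥ 2. -/
theorem stmt_3 (lam : ℝ) (hlam0 : 0 < lam) (hlam1 : lam < 1)
    (Lmax : ℕ) (hL : 1 ≤ Lmax)
    (μ₁ μ₂ : ℕ → ℝ)
    (hμ₁0 : ∀ l, 0 ≤ μ₁ l) (hμ₁1 : ∑ l ∈ Finset.Icc 1 Lmax, μ₁ l = 1)
    (hμ₂0 : ∀ l, 0 ≤ μ₂ l) (hμ₂1 : ∑ l ∈ Finset.Icc 1 Lmax, μ₂ l = 1)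
    (hdom : ∀ l ∈ Finset.Icc 1 Lmax,
      ∑ j ∈ Finset.Icc l Lmax, μ₁ j ≤ ∑ j ∈ Finset.Icc l Lmax, μ₂ j)
    (hstrict : ∃ l ∈ Finset.Icc 1 Lmax,
      ∑ j ∈ Finset.Icc l Lmax, μ₁ j < ∑ j ∈ Finset.Icc l Lmax, μ₂ j)
    (r₁ r₂ : ℕ → ℝ) (hr₁0 : r₁ 0 = 1) (hr₂0 : r₂ 0 = 1)
    (hrec₁ : ∀ k, r₁ (k + 1) = lam * ∑ l ∈ Finset.Icc 1 Lmax, (r₁ k) ^ l * μ₁ l)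
    (hrec₂ : ∀ k, r₂ (k + 1) = lam * ∑ l ∈ Finset.Icc 1 Lmax, (r₂ k) ^ l * μ₂ l)
    (hr₁ : ∀ k, 1 ≤ k → 0 < r₁ k ∧ r₁ k < 1)
    (hr₂ : ∀ k, 1 ≤ k → 0 < r₂ k ∧ r₂ k < 1) :
    (∀ x : ℝ, 0 < x → x < 1 →
      ∑ l ∈ Finset.Icc 1 Lmax, x ^ l * μ₂ l < ∑ l ∈ Finset.Icc 1 Lmax, x ^ l * μ₁ l) ∧
    (∀ k, 2 ≤ k → r₂ k < r₁ k) :=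
  stmt_3_general lam hlam0 Lmax μ₁ μ₂ hμ₁0 hμ₁1 hμ₂1 hdom hstrict r₁ r₂ hr₁0 hr₂0 hrec₁ hrec₂ hr₂
end

section
/- Define the marginal value of sampling V(L, μ) = Σ_{k=0}^∞ (r_μ(k)^L − r_μ(k)^{L+1}) for integer L, where r_μ is the mean field equilibrium sequence for strategy μ and 0<λ<1. If λ² ≤ 1/2 and μ <_st μ̃ strictly, then V(L, μ) > V(L, μ̃) for every integer L with 1 ≤ L ≤ L_max − 1. -/
/-!
Both equilibrium sequences start with `r 0 = 1`, `r 1 = λ`. Abel summation of the generating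
function `∑ x ^ l μ l` against the upper tails of `μ` shows that strict stochastic dominance makes it
strictly smaller for `μ̃` at every `0 < x < 1`; with monotonicity in `x` this propagates to
`r̃ k < r k` for all `k ≥ 2`. There `r k ≤ λ ^ k ≤ λ ^ 2 ≤ 1/2 ≤ L / (L + 1)`, a range on which
`x ↦ x ^ L - x ^ (L + 1)` is strictly increasing, so the series for `V(L, μ)` dominates that for
`V(L, μ̃)` termwise, strictly from `k = 2` on; both converge by comparison with `∑ λ ^ k`.
-/

open Finset

lemma sum_Icc_one_pow_pred_sub_pow (x : ℝ) (n : ℕ) :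
    ∑ l ∈ Icc 1 n, (x ^ (l - 1) - x ^ l) = 1 - x ^ n := by
  induction n with
  | zero => simp
  | succ n ih =>
    rw [sum_Icc_succ_top (by omega), ih, Nat.add_sub_cancel]
    ring

lemma sum_pow_mul_eq_sub_sum_mul_tail (x : ℝ) (μ : ℕ → ℝ) (M : ℕ) :
    ∑ l ∈ Icc 1 M, x ^ l * μ l =
      ∑ l ∈ Icc 1 M, μ l - ∑ l ∈ Icc 1 M, (x ^ (l - 1) - x ^ l) * ∑ j ∈ Icc l M, μ j := by
  have hswap : ∑ l ∈ Icc 1 M, (x ^ (l - 1) - x ^ l) * ∑ j ∈ Icc l M, μ j =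
      ∑ j ∈ Icc 1 M, (∑ l ∈ Icc 1 j, (x ^ (l - 1) - x ^ l)) * μ j := by
    simp_rw [mul_sum, sum_mul]
    exact sum_comm' fun l j => by simp only [mem_Icc]; omega
  simp_rw [hswap, sum_Icc_one_pow_pred_sub_pow, ← sum_sub_distrib]
  exact sum_congr rfl fun _ _ => by ring

lemma sum_pow_mul_sub_sum_pow_mul_eq {μ ν : ℕ → ℝ} {M : ℕ}
    (hmass : ∑ l ∈ Icc 1 M, μ l = ∑ l ∈ Icc 1 M, ν l) (x : ℝ) :
    ∑ l ∈ Icc 1 M, x ^ l * μ l - ∑ l ∈ Icc 1 M, x ^ l * ν l =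
      ∑ l ∈ Icc 1 M, (x ^ (l - 1) - x ^ l) *
        (∑ j ∈ Icc l M, ν j - ∑ j ∈ Icc l M, μ j) := by
  simp_rw [sum_pow_mul_eq_sub_sum_mul_tail x, hmass, mul_sub, sum_sub_distrib]
  ring

lemma pow_le_pow_pred {x : ℝ} (hx0 : 0 ≤ x) (hx1 : x ≤ 1) (l : ℕ) : x ^ l ≤ x ^ (l - 1) :=
  pow_le_pow_of_le_one hx0 hx1 (Nat.sub_le l 1)

lemma pow_lt_pow_pred {x : ℝ} (hx0 : 0 < x) (hx1 : x < 1) {l : ℕ} (hl : 1 ≤ l) :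
    x ^ l < x ^ (l - 1) :=
  pow_lt_pow_right_of_lt_one₀ hx0 hx1 (by omega)

section StochasticDominance

variable {μ ν : ℕ → ℝ} {M : ℕ} {x : ℝ}

lemma sum_pow_mul_le_of_tail_le (hmass : ∑ l ∈ Icc 1 M, μ l = ∑ l ∈ Icc 1 M, ν l)
    (hdom : ∀ l ∈ Icc 1 M, ∑ j ∈ Icc l M, μ j ≤ ∑ j ∈ Icc l M, ν j)
    (hx0 : 0 ≤ x) (hx1 : x ≤ 1) :
    ∑ l ∈ Icc 1 M, x ^ l * ν l ≤ ∑ l ∈ Icc 1 M, x ^ l * μ l := by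
  rw [← sub_nonneg, sum_pow_mul_sub_sum_pow_mul_eq hmass]
  exact sum_nonneg fun l hl =>
    mul_nonneg (sub_nonneg.2 (pow_le_pow_pred hx0 hx1 l)) (sub_nonneg.2 (hdom l hl))

lemma sum_pow_mul_lt_of_tail_lt (hmass : ∑ l ∈ Icc 1 M, μ l = ∑ l ∈ Icc 1 M, ν l)
    (hdom : ∀ l ∈ Icc 1 M, ∑ j ∈ Icc l M, μ j ≤ ∑ j ∈ Icc l M, ν j)
    (hstrict : ∃ l ∈ Icc 1 M, ∑ j ∈ Icc l M, μ j < ∑ j ∈ Icc l M, ν j)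
    (hx0 : 0 < x) (hx1 : x < 1) :
    ∑ l ∈ Icc 1 M, x ^ l * ν l < ∑ l ∈ Icc 1 M, x ^ l * μ l := by
  rw [← sub_pos, sum_pow_mul_sub_sum_pow_mul_eq hmass]
  obtain ⟨l₀, hl₀, hlt⟩ := hstrict
  refine sum_pos' (fun l hl => mul_nonneg (sub_nonneg.2 (pow_le_pow_pred hx0.le hx1.le l))
    (sub_nonneg.2 (hdom l hl))) ⟨l₀, hl₀, mul_pos ?_ (sub_pos.2 hlt)⟩
  exact sub_pos.2 (pow_lt_pow_pred hx0 hx1 (mem_Icc.1 hl₀).1)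

end StochasticDominance

section GeneratingFunction

variable {μ : ℕ → ℝ} {M : ℕ}

lemma sum_pow_mul_le_mul_sum {x : ℝ} (hμ : ∀ l, 0 ≤ μ l) (hx0 : 0 ≤ x) (hx1 : x ≤ 1) :
    ∑ l ∈ Icc 1 M, x ^ l * μ l ≤ x * ∑ l ∈ Icc 1 M, μ l := by
  rw [mul_sum]
  refine sum_le_sum fun l hl => mul_le_mul_of_nonneg_right ?_ (hμ l)
  simpa using pow_le_pow_of_le_one hx0 hx1 (mem_Icc.1 hl).1

lemma sum_pow_mul_strictMonoOn (hμ : ∀ l, 0 ≤ μ l) (hmass : 0 < ∑ l ∈ Icc 1 M, μ l) :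
    StrictMonoOn (fun x : ℝ => ∑ l ∈ Icc 1 M, x ^ l * μ l) (Set.Ici 0) := by
  intro a ha b _ hab
  have hmass' : ∑ _l ∈ Icc 1 M, (0 : ℝ) < ∑ l ∈ Icc 1 M, μ l := by simpa using hmass
  obtain ⟨l₀, hl₀, hpos⟩ := exists_lt_of_sum_lt hmass'
  refine sum_lt_sum (fun l _ => mul_le_mul_of_nonneg_right
    (pow_le_pow_left₀ ha hab.le l) (hμ l)) ⟨l₀, hl₀, ?_⟩
  have hl₀ : l₀ ≠ 0 := by simp only [mem_Icc] at hl₀; omega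
  exact mul_lt_mul_of_pos_right (pow_lt_pow_left₀ hab ha hl₀) hpos

end GeneratingFunction

lemma pow_sub_pow_succ_strictMonoOn {L : ℕ} (hL : 1 ≤ L) :
    StrictMonoOn (fun x : ℝ => x ^ L - x ^ (L + 1)) (Set.Icc 0 (L / (L + 1))) := by
  refine strictMonoOn_of_deriv_pos (convex_Icc _ _) (by fun_prop) fun x hx => ?_
  rw [interior_Icc] at hx
  obtain ⟨hx0, hxL⟩ := hx
  have hderiv : deriv (fun x : ℝ => x ^ L - x ^ (L + 1)) x =
      x ^ (L - 1) * (L - (L + 1) * x) := by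
    rw [((hasDerivAt_pow L x).fun_sub (hasDerivAt_pow (L + 1) x)).deriv]
    obtain ⟨n, rfl⟩ := Nat.exists_eq_add_of_le' hL
    simp only [Nat.add_sub_cancel]
    push_cast
    ring
  rw [hderiv]
  have hL1 : (0 : ℝ) < L + 1 := by positivity
  exact mul_pos (pow_pos hx0 _) (by rw [lt_div_iff₀ hL1] at hxL; linarith)

lemma half_le_div_succ {L : ℕ} (hL : 1 ≤ L) : (1 / 2 : ℝ) ≤ L / (L + 1) := by
  have : (1 : ℝ) ≤ L := by exact_mod_cast hL
  rw [div_le_div_iff₀ two_pos (by positivity)]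
  linarith

lemma pow_sub_pow_succ_nonneg {x : ℝ} (hx0 : 0 ≤ x) (hx1 : x ≤ 1) (L : ℕ) :
    0 ≤ x ^ L - x ^ (L + 1) :=
  sub_nonneg.2 (pow_le_pow_of_le_one hx0 hx1 L.le_succ)

lemma pow_sub_pow_succ_le_self {x : ℝ} (hx0 : 0 ≤ x) (hx1 : x ≤ 1) {L : ℕ} (hL : 1 ≤ L) :
    x ^ L - x ^ (L + 1) ≤ x := by
  have := pow_le_pow_of_le_one hx0 hx1 hL
  have := pow_nonneg hx0 (L + 1)
  rw [pow_one] at *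
  linarith

lemma summable_pow_sub_pow_succ {lam : ℝ} (hlam0 : 0 ≤ lam) (hlam1 : lam < 1)
    {s : ℕ → ℝ} (hs0 : ∀ k, 0 ≤ s k) (hs : ∀ k, s k ≤ lam ^ k) {L : ℕ} (hL : 1 ≤ L) :
    Summable fun k => s k ^ L - s k ^ (L + 1) := by
  have hs1 k : s k ≤ 1 := (hs k).trans (pow_le_one₀ hlam0 hlam1.le)
  exact (summable_geometric_of_lt_one hlam0 hlam1).of_nonneg_of_le
    (fun k => pow_sub_pow_succ_nonneg (hs0 k) (hs1 k) L)
    (fun k => (pow_sub_pow_succ_le_self (hs0 k) (hs1 k) hL).trans (hs k))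

section MeanField

variable {lam : ℝ} {M : ℕ} {μ r : ℕ → ℝ}

lemma meanField_nonneg (hlam : 0 ≤ lam) (hμ : ∀ l, 0 ≤ μ l) (hr0 : 0 ≤ r 0)
    (hrec : ∀ k, r (k + 1) = lam * ∑ l ∈ Icc 1 M, r k ^ l * μ l) (k : ℕ) : 0 ≤ r k := by
  induction k with
  | zero => exact hr0
  | succ k ih =>
    rw [hrec]
    exact mul_nonneg hlam (sum_nonneg fun l _ => mul_nonneg (pow_nonneg ih l) (hμ l))

lemma meanField_one (hμ1 : ∑ l ∈ Icc 1 M, μ l = 1) (hr0 : r 0 = 1)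
    (hrec : ∀ k, r (k + 1) = lam * ∑ l ∈ Icc 1 M, r k ^ l * μ l) : r 1 = lam := by
  simp [hrec 0, hr0, hμ1]

lemma meanField_le_pow (hlam0 : 0 ≤ lam) (hlam1 : lam ≤ 1) (hμ : ∀ l, 0 ≤ μ l)
    (hμ1 : ∑ l ∈ Icc 1 M, μ l = 1) (hr0 : r 0 = 1)
    (hrec : ∀ k, r (k + 1) = lam * ∑ l ∈ Icc 1 M, r k ^ l * μ l) (k : ℕ) : r k ≤ lam ^ k := by
  induction k with
  | zero => simp [hr0]
  | succ k ih =>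
    have hr := meanField_nonneg hlam0 hμ (hr0 ▸ zero_le_one) hrec k
    have hsum := sum_pow_mul_le_mul_sum (M := M) hμ hr (ih.trans (pow_le_one₀ hlam0 hlam1))
    rw [hμ1, mul_one] at hsum
    calc r (k + 1) = lam * ∑ l ∈ Icc 1 M, r k ^ l * μ l := hrec k
      _ ≤ lam * lam ^ k := mul_le_mul_of_nonneg_left (hsum.trans ih) hlam0
      _ = lam ^ (k + 1) := by ring

end MeanField

lemma meanField_lt_of_dominates {lam : ℝ} (hlam0 : 0 < lam) (hlam1 : lam < 1)
    {M : ℕ} {μ μt : ℕ → ℝ} (hμ0 : ∀ l, 0 ≤ μ l) (hμ1 : ∑ l ∈ Icc 1 M, μ l = 1)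
    (hμt0 : ∀ l, 0 ≤ μt l) (hμt1 : ∑ l ∈ Icc 1 M, μt l = 1)
    (hdom : ∀ l ∈ Icc 1 M, ∑ j ∈ Icc l M, μ j ≤ ∑ j ∈ Icc l M, μt j)
    (hstrict : ∃ l ∈ Icc 1 M, ∑ j ∈ Icc l M, μ j < ∑ j ∈ Icc l M, μt j)
    {r rt : ℕ → ℝ} (hr0 : r 0 = 1) (hrt0 : rt 0 = 1)
    (hrec : ∀ k, r (k + 1) = lam * ∑ l ∈ Icc 1 M, r k ^ l * μ l)
    (hrect : ∀ k, rt (k + 1) = lam * ∑ l ∈ Icc 1 M, rt k ^ l * μt l)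
    {k : ℕ} (hk : 2 ≤ k) : rt k < r k := by
  have hmass : ∑ l ∈ Icc 1 M, μ l = ∑ l ∈ Icc 1 M, μt l := hμ1.trans hμt1.symm
  induction k, hk using Nat.le_induction with
  | base =>
    rw [hrec, hrect, meanField_one hμ1 hr0 hrec, meanField_one hμt1 hrt0 hrect]
    exact mul_lt_mul_of_pos_left
      (sum_pow_mul_lt_of_tail_lt hmass hdom hstrict hlam0 hlam1) hlam0
  | succ k _ ih =>
    have hrt := meanField_nonneg hlam0.le hμt0 (hrt0 ▸ zero_le_one) hrect k
    have hrt1 := (meanField_le_pow hlam0.le hlam1.le hμt0 hμt1 hrt0 hrect k).trans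
      (pow_le_one₀ hlam0.le hlam1.le)
    rw [hrec, hrect]
    refine mul_lt_mul_of_pos_left ((sum_pow_mul_le_of_tail_le hmass hdom hrt hrt1).trans_lt ?_)
      hlam0
    exact sum_pow_mul_strictMonoOn hμ0 (hμ1 ▸ one_pos) hrt (hrt.trans ih.le) ih

theorem stmt_7_general (lam : ℝ) (hlam0 : 0 < lam) (hlam1 : lam < 1) (hlam2 : lam ^ 2 ≤ 1 / 2)
    (Lmax : ℕ)
    (μ μt : ℕ → ℝ)
    (hμ0 : ∀ l, 0 ≤ μ l) (hμ1 : ∑ l ∈ Finset.Icc 1 Lmax, μ l = 1)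
    (hμt0 : ∀ l, 0 ≤ μt l) (hμt1 : ∑ l ∈ Finset.Icc 1 Lmax, μt l = 1)
    (hdom : ∀ l ∈ Finset.Icc 1 Lmax,
      ∑ j ∈ Finset.Icc l Lmax, μ j ≤ ∑ j ∈ Finset.Icc l Lmax, μt j)
    (hstrict : ∃ l ∈ Finset.Icc 1 Lmax,
      ∑ j ∈ Finset.Icc l Lmax, μ j < ∑ j ∈ Finset.Icc l Lmax, μt j)
    (r rt : ℕ → ℝ) (hr0 : r 0 = 1) (hrt0 : rt 0 = 1)
    (hrec : ∀ k, r (k + 1) = lam * ∑ l ∈ Finset.Icc 1 Lmax, (r k) ^ l * μ l)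
    (hrect : ∀ k, rt (k + 1) = lam * ∑ l ∈ Finset.Icc 1 Lmax, (rt k) ^ l * μt l) :
    ∀ L : ℕ, 1 ≤ L → L ≤ Lmax - 1 →
      (∑' k : ℕ, ((rt k) ^ L - (rt k) ^ (L + 1))) <
        ∑' k : ℕ, ((r k) ^ L - (r k) ^ (L + 1)) := by
  intro L hL1 _
  have hr := meanField_nonneg hlam0.le hμ0 (hr0 ▸ zero_le_one) hrec
  have hrt := meanField_nonneg hlam0.le hμt0 (hrt0 ▸ zero_le_one) hrect
  have hr_pow := meanField_le_pow hlam0.le hlam1.le hμ0 hμ1 hr0 hrec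
  have hrt_pow := meanField_le_pow hlam0.le hlam1.le hμt0 hμt1 hrt0 hrect
  have hlt k (hk : 2 ≤ k) : rt k ^ L - rt k ^ (L + 1) < r k ^ L - r k ^ (L + 1) := by
    have hrt_lt := meanField_lt_of_dominates hlam0 hlam1 hμ0 hμ1 hμt0 hμt1 hdom hstrict
      hr0 hrt0 hrec hrect hk
    have hr_half : r k ≤ L / (L + 1) := calc
      r k ≤ lam ^ k := hr_pow k
      _ ≤ lam ^ 2 := pow_le_pow_of_le_one hlam0.le hlam1.le hk
      _ ≤ L / (L + 1) := hlam2.trans (half_le_div_succ hL1)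
    exact pow_sub_pow_succ_strictMonoOn hL1 ⟨hrt k, hrt_lt.le.trans hr_half⟩
      ⟨hr k, hr_half⟩ hrt_lt
  have hle k : rt k ^ L - rt k ^ (L + 1) ≤ r k ^ L - r k ^ (L + 1) := by
    rcases lt_or_ge k 2 with hk | hk
    · interval_cases k
      · simp [hr0, hrt0]
      · simp [meanField_one hμ1 hr0 hrec, meanField_one hμt1 hrt0 hrect]
    · exact (hlt k hk).le
  exact (summable_pow_sub_pow_succ hlam0.le hlam1 hrt hrt_pow hL1).tsum_lt_tsum hle (hlt 2 le_rfl)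
    (summable_pow_sub_pow_succ hlam0.le hlam1 hr hr_pow hL1)

/-- If λ² ≤ 1/2 and μ <_st μ̃ strictly, then the marginal value of sampling satisfies
V(L, μ) > V(L, μ̃) for every integer 1 ≤ L ≤ L_max − 1, where
V(L, μ) = Σ_k (r_μ(k)^L − r_μ(k)^{L+1}). -/
theorem stmt_7 (lam : ℝ) (hlam0 : 0 < lam) (hlam1 : lam < 1) (hlam2 : lam ^ 2 ≤ 1 / 2)
    (Lmax : ℕ) (hL : 1 ≤ Lmax)
    (μ μt : ℕ → ℝ)
    (hμ0 : ∀ l, 0 ≤ μ l) (hμ1 : ∑ l ∈ Finset.Icc 1 Lmax, μ l = 1)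
    (hμt0 : ∀ l, 0 ≤ μt l) (hμt1 : ∑ l ∈ Finset.Icc 1 Lmax, μt l = 1)
    (hdom : ∀ l ∈ Finset.Icc 1 Lmax,
      ∑ j ∈ Finset.Icc l Lmax, μ j ≤ ∑ j ∈ Finset.Icc l Lmax, μt j)
    (hstrict : ∃ l ∈ Finset.Icc 1 Lmax,
      ∑ j ∈ Finset.Icc l Lmax, μ j < ∑ j ∈ Finset.Icc l Lmax, μt j)
    (r rt : ℕ → ℝ) (hr0 : r 0 = 1) (hrt0 : rt 0 = 1)
    (hrec : ∀ k, r (k + 1) = lam * ∑ l ∈ Finset.Icc 1 Lmax, (r k) ^ l * μ l)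
    (hrect : ∀ k, rt (k + 1) = lam * ∑ l ∈ Finset.Icc 1 Lmax, (rt k) ^ l * μt l) :
    ∀ L : ℕ, 1 ≤ L → L ≤ Lmax - 1 →
      (∑' k : ℕ, ((rt k) ^ L - (rt k) ^ (L + 1))) <
        ∑' k : ℕ, ((r k) ^ L - (r k) ^ (L + 1)) :=
  stmt_7_general lam hlam0 hlam1 hlam2 Lmax μ μt hμ0 hμ1 hμt0 hμt1 hdom hstrict r rt hr0 hrt0 hrec
    hrect
end

section
/- If μ₁ <_st μ₂ (strict first-order stochastic dominance) for probability measures on {1,...,L_max} and 0<λ<1, then for every L ∈ {1,...,L_max}, the mean-field expected waiting times satisfy E[W(L, μ₁)] > E[W(L, μ₂)], where E[W(L,μ)] = Σ_{k=0}^∞ r_μ(k)^L. -/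
/-!
Write `g_μ(r) = ∑ₗ rˡ μ(l)`, so that `r_μ(k+1) = λ g_μ(r_μ(k))`. By Abel summation,
`g_μ(r) = ∑ⱼ (rʲ - rʲ⁻¹) T_μ(j) + 1` with tails `T_μ(j) = μ{l ≥ j}`; since `rʲ` strictly decreases
in `j` for `0 < r < 1`, strict dominance gives `g_{μ₂}(r) < g_{μ₁}(r)`. Both sequences start with
`1, λ`, and `g_{μ₁}` is monotone, so induction gives `r_{μ₂}(k) < r_{μ₁}(k)` for `k ≥ 2`. The bound
`r_μ(k) ≤ λᵏ` makes the series converge, and a termwise strict inequality passes to the sums.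
-/

open Finset

lemma sum_Icc_sub_pred_eq (f : ℕ → ℝ) (n : ℕ) :
    ∑ j ∈ Icc 1 n, (f j - f (j - 1)) = f n - f 0 := by
  induction n with
  | zero => simp
  | succ n ih => rw [sum_Icc_succ_top (by omega), ih, Nat.add_sub_cancel]; ring

lemma sum_Icc_mul_eq_add_sum_tail (N : ℕ) (f ν : ℕ → ℝ) :
    ∑ l ∈ Icc 1 N, f l * ν l
      = f 0 * ∑ l ∈ Icc 1 N, ν l
        + ∑ j ∈ Icc 1 N, (f j - f (j - 1)) * ∑ l ∈ Icc j N, ν l := by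
  have hswap : ∑ l ∈ Icc 1 N, ∑ j ∈ Icc 1 l, (f j - f (j - 1)) * ν l
      = ∑ j ∈ Icc 1 N, ∑ l ∈ Icc j N, (f j - f (j - 1)) * ν l :=
    sum_comm' fun l j => by simp only [mem_Icc]; omega
  simp only [mul_sum, ← hswap, ← sum_mul, sum_Icc_sub_pred_eq, ← sum_add_distrib]
  exact sum_congr rfl fun l _ => by ring

lemma sum_mul_lt_sum_mul_of_tail_le {N : ℕ} {f μ₁ μ₂ : ℕ → ℝ} (hf : StrictAnti f)
    (htot : ∑ l ∈ Icc 1 N, μ₁ l = ∑ l ∈ Icc 1 N, μ₂ l)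
    (hdom : ∀ j ∈ Icc 1 N, ∑ l ∈ Icc j N, μ₁ l ≤ ∑ l ∈ Icc j N, μ₂ l)
    (hstrict : ∃ j ∈ Icc 1 N, ∑ l ∈ Icc j N, μ₁ l < ∑ l ∈ Icc j N, μ₂ l) :
    ∑ l ∈ Icc 1 N, f l * μ₂ l < ∑ l ∈ Icc 1 N, f l * μ₁ l := by
  have hdrop : ∀ j ∈ Icc 1 N, f j - f (j - 1) < 0 := fun j hj =>
    sub_neg.2 (hf (Nat.sub_lt (mem_Icc.1 hj).1 one_pos))
  rw [sum_Icc_mul_eq_add_sum_tail N f μ₁, sum_Icc_mul_eq_add_sum_tail N f μ₂, htot]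
  refine add_lt_add_right (sum_lt_sum (fun j hj => ?_) ?_) _
  · exact mul_le_mul_of_nonpos_left (hdom j hj) (hdrop j hj).le
  · obtain ⟨j, hj, hlt⟩ := hstrict
    exact ⟨j, hj, mul_lt_mul_of_neg_left hlt (hdrop j hj)⟩

def pgf (N : ℕ) (μ : ℕ → ℝ) (r : ℝ) : ℝ := ∑ l ∈ Icc 1 N, r ^ l * μ l

section pgf

variable {N : ℕ} {μ : ℕ → ℝ}

lemma pgf_pos (hμ0 : ∀ l, 0 ≤ μ l) (hμ1 : ∑ l ∈ Icc 1 N, μ l = 1) {r : ℝ} (hr : 0 < r) :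
    0 < pgf N μ r := by
  obtain ⟨l, hl, hμl⟩ : ∃ l ∈ Icc 1 N, (0 : ℝ) < μ l :=
    exists_lt_of_sum_lt (by simp [hμ1])
  exact sum_pos' (fun l _ => mul_nonneg (pow_pos hr l).le (hμ0 l))
    ⟨l, hl, mul_pos (pow_pos hr l) hμl⟩

lemma pgf_le_self (hμ0 : ∀ l, 0 ≤ μ l) (hμ1 : ∑ l ∈ Icc 1 N, μ l = 1) {r : ℝ}
    (hr0 : 0 ≤ r) (hr1 : r ≤ 1) : pgf N μ r ≤ r :=
  calc pgf N μ r ≤ ∑ l ∈ Icc 1 N, r * μ l :=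
        sum_le_sum fun l hl => mul_le_mul_of_nonneg_right
          (pow_le_of_le_one hr0 hr1 (Nat.one_le_iff_ne_zero.1 (mem_Icc.1 hl).1)) (hμ0 l)
    _ = r := by rw [← mul_sum, hμ1, mul_one]

lemma pgf_le_pgf (hμ0 : ∀ l, 0 ≤ μ l) {s t : ℝ} (hs : 0 ≤ s) (hst : s ≤ t) :
    pgf N μ s ≤ pgf N μ t :=
  sum_le_sum fun l _ => mul_le_mul_of_nonneg_right (pow_le_pow_left₀ hs hst l) (hμ0 l)

lemma pgf_lt_pgf_of_tail_le {μ' : ℕ → ℝ}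
    (htot : ∑ l ∈ Icc 1 N, μ l = ∑ l ∈ Icc 1 N, μ' l)
    (hdom : ∀ j ∈ Icc 1 N, ∑ l ∈ Icc j N, μ l ≤ ∑ l ∈ Icc j N, μ' l)
    (hstrict : ∃ j ∈ Icc 1 N, ∑ l ∈ Icc j N, μ l < ∑ l ∈ Icc j N, μ' l)
    {r : ℝ} (hr0 : 0 < r) (hr1 : r < 1) : pgf N μ' r < pgf N μ r :=
  sum_mul_lt_sum_mul_of_tail_le (pow_right_strictAnti₀ hr0 hr1) htot hdom hstrict

end pgf

section Orbit

variable {N : ℕ} {μ : ℕ → ℝ} {lam : ℝ} {r : ℕ → ℝ}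

lemma orbit_mem_Ioc (hlam0 : 0 < lam) (hlam1 : lam ≤ 1) (hμ0 : ∀ l, 0 ≤ μ l)
    (hμ1 : ∑ l ∈ Icc 1 N, μ l = 1) (hr0 : r 0 = 1)
    (hrec : ∀ k, r (k + 1) = lam * pgf N μ (r k)) (k : ℕ) : r k ∈ Set.Ioc 0 (lam ^ k) := by
  induction k with
  | zero => simp [hr0]
  | succ k ih =>
    obtain ⟨hpos, hle⟩ := ih
    rw [hrec k, pow_succ', Set.mem_Ioc]
    refine ⟨mul_pos hlam0 (pgf_pos hμ0 hμ1 hpos), mul_le_mul_of_nonneg_left ?_ hlam0.le⟩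
    exact (pgf_le_self hμ0 hμ1 hpos.le (hle.trans (pow_le_one₀ hlam0.le hlam1))).trans hle

lemma orbit_one (hμ1 : ∑ l ∈ Icc 1 N, μ l = 1) (hr0 : r 0 = 1)
    (hrec : ∀ k, r (k + 1) = lam * pgf N μ (r k)) : r 1 = lam := by
  simp [hrec 0, hr0, pgf, hμ1]

lemma summable_pow_of_le_geometric (hlam0 : 0 ≤ lam) (hlam1 : lam < 1)
    (hr : ∀ k, r k ∈ Set.Icc 0 (lam ^ k)) {L : ℕ} (hL : L ≠ 0) :
    Summable fun k => r k ^ L := by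
  refine .of_nonneg_of_le (fun k => pow_nonneg (hr k).1 L) (fun k => ?_)
    (summable_geometric_of_lt_one (pow_nonneg hlam0 L) (pow_lt_one₀ hlam0 hlam1 hL))
  rw [← pow_mul, mul_comm, pow_mul]
  exact pow_le_pow_left₀ (hr k).1 (hr k).2 L

end Orbit

theorem stmt_9_general (lam : ℝ) (hlam0 : 0 < lam) (hlam1 : lam < 1)
    (Lmax : ℕ)
    (μ₁ μ₂ : ℕ → ℝ)
    (hμ₁0 : ∀ l, 0 ≤ μ₁ l) (hμ₁1 : ∑ l ∈ Finset.Icc 1 Lmax, μ₁ l = 1)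
    (hμ₂0 : ∀ l, 0 ≤ μ₂ l) (hμ₂1 : ∑ l ∈ Finset.Icc 1 Lmax, μ₂ l = 1)
    (hdom : ∀ l ∈ Finset.Icc 1 Lmax,
      ∑ j ∈ Finset.Icc l Lmax, μ₁ j ≤ ∑ j ∈ Finset.Icc l Lmax, μ₂ j)
    (hstrict : ∃ l ∈ Finset.Icc 1 Lmax,
      ∑ j ∈ Finset.Icc l Lmax, μ₁ j < ∑ j ∈ Finset.Icc l Lmax, μ₂ j)
    (r₁ r₂ : ℕ → ℝ) (hr₁0 : r₁ 0 = 1) (hr₂0 : r₂ 0 = 1)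
    (hrec₁ : ∀ k, r₁ (k + 1) = lam * ∑ l ∈ Finset.Icc 1 Lmax, (r₁ k) ^ l * μ₁ l)
    (hrec₂ : ∀ k, r₂ (k + 1) = lam * ∑ l ∈ Finset.Icc 1 Lmax, (r₂ k) ^ l * μ₂ l) :
    ∀ L ∈ Finset.Icc 1 Lmax,
      (∑' k : ℕ, (r₂ k) ^ L) < ∑' k : ℕ, (r₁ k) ^ L := by
  have hb₁ := orbit_mem_Ioc hlam0 hlam1.le hμ₁0 hμ₁1 hr₁0 hrec₁
  have hb₂ := orbit_mem_Ioc hlam0 hlam1.le hμ₂0 hμ₂1 hr₂0 hrec₂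
  have hg : ∀ {s}, 0 < s → s < 1 → pgf Lmax μ₂ s < pgf Lmax μ₁ s :=
    pgf_lt_pgf_of_tail_le (hμ₁1.trans hμ₂1.symm) hdom hstrict
  have hlt : ∀ k, r₂ (k + 2) < r₁ (k + 2) := by
    intro k
    induction k with
    | zero =>
      rw [hrec₁, hrec₂, orbit_one hμ₁1 hr₁0 hrec₁, orbit_one hμ₂1 hr₂0 hrec₂]
      exact mul_lt_mul_of_pos_left (hg hlam0 hlam1) hlam0
    | succ k ih =>
      rw [hrec₁, hrec₂]
      refine mul_lt_mul_of_pos_left ?_ hlam0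
      have hr₂1 : r₂ (k + 2) < 1 := (hb₂ _).2.trans_lt (pow_lt_one₀ hlam0.le hlam1 (by omega))
      exact (hg (hb₂ _).1 hr₂1).trans_le (pgf_le_pgf hμ₁0 (hb₂ _).1.le ih.le)
  have hle : ∀ k, r₂ k ≤ r₁ k
    | 0 => by rw [hr₁0, hr₂0]
    | 1 => by rw [orbit_one hμ₁1 hr₁0 hrec₁, orbit_one hμ₂1 hr₂0 hrec₂]
    | k + 2 => (hlt k).le
  intro L hL
  have hL0 : L ≠ 0 := Nat.one_le_iff_ne_zero.1 (mem_Icc.1 hL).1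
  refine Summable.tsum_lt_tsum_of_nonneg (i := 2) (fun k => pow_nonneg (hb₂ k).1.le L)
    (fun k => pow_le_pow_left₀ (hb₂ k).1.le (hle k) L) (pow_lt_pow_left₀ (hlt 0) (hb₂ 2).1.le hL0)
    (summable_pow_of_le_geometric hlam0.le hlam1 (fun k => Set.Ioc_subset_Icc_self (hb₁ k)) hL0)

/-- Positive externality in the mean field model: strict stochastic dominance
μ₁ <_st μ₂ implies E[W(L,μ₁)] > E[W(L,μ₂)] for every L ∈ {1,...,L_max}, where
E[W(L,μ)] = Σ_k r_μ(k)^L. -/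
theorem stmt_9 (lam : ℝ) (hlam0 : 0 < lam) (hlam1 : lam < 1)
    (Lmax : ℕ) (hL : 1 ≤ Lmax)
    (μ₁ μ₂ : ℕ → ℝ)
    (hμ₁0 : ∀ l, 0 ≤ μ₁ l) (hμ₁1 : ∑ l ∈ Finset.Icc 1 Lmax, μ₁ l = 1)
    (hμ₂0 : ∀ l, 0 ≤ μ₂ l) (hμ₂1 : ∑ l ∈ Finset.Icc 1 Lmax, μ₂ l = 1)
    (hdom : ∀ l ∈ Finset.Icc 1 Lmax,
      ∑ j ∈ Finset.Icc l Lmax, μ₁ j ≤ ∑ j ∈ Finset.Icc l Lmax, μ₂ j)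
    (hstrict : ∃ l ∈ Finset.Icc 1 Lmax,
      ∑ j ∈ Finset.Icc l Lmax, μ₁ j < ∑ j ∈ Finset.Icc l Lmax, μ₂ j)
    (r₁ r₂ : ℕ → ℝ) (hr₁0 : r₁ 0 = 1) (hr₂0 : r₂ 0 = 1)
    (hrec₁ : ∀ k, r₁ (k + 1) = lam * ∑ l ∈ Finset.Icc 1 Lmax, (r₁ k) ^ l * μ₁ l)
    (hrec₂ : ∀ k, r₂ (k + 1) = lam * ∑ l ∈ Finset.Icc 1 Lmax, (r₂ k) ^ l * μ₂ l) :
    ∀ L ∈ Finset.Icc 1 Lmax,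
      (∑' k : ℕ, (r₂ k) ^ L) < ∑' k : ℕ, (r₁ k) ^ L :=
  stmt_9_general lam hlam0 hlam1 Lmax μ₁ μ₂ hμ₁0 hμ₁1 hμ₂0 hμ₂1 hdom hstrict r₁ r₂ hr₁0 hr₂0 hrec₁
    hrec₂
end

section
/- In the mean field model with cost C(L,μ) = c·Σ_k r_μ(k)^L + c_s·L, no Nash equilibrium μ* can strictly stochastically dominate a social optimum μ*_soc. That is: if μ*_soc minimizes Σ_L μ(L)·C(L,μ) over probability measures μ, if μ* satisfies Σ_L μ*(L)·C(L,μ*) ≤ Σ_L μ(L)·C(L,μ*) for all μ, and if strict dominance μ*_soc <_st μ* implies C(L, μ*_soc) > C(L, μ*) for all L (positive externality), then μ*_soc <_st μ* leads to a contradiction, so ¬(μ*_soc <_st μ*). -/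
/-!
The social cost of μ*_soc is at most that of μ* (social optimality), which is at most the cost
μ* assigns to the strategy μ*_soc (Nash property). If μ* strictly dominated μ*_soc, positive
externality would make every cost under μ* strictly smaller than under μ*_soc, so averaging
against μ*_soc would give the opposite strict inequality.
-/

theorem Finset.sum_mul_lt_sum_mul_of_sum_pos {ι R : Type*} [Semiring R] [LinearOrder R]
    [IsStrictOrderedRing R]
    {s : Finset ι} {w f g : ι → R} (hw : ∀ i ∈ s, 0 ≤ w i) (hsum : 0 < ∑ i ∈ s, w i)
    (hfg : ∀ i ∈ s, f i < g i) : ∑ i ∈ s, w i * f i < ∑ i ∈ s, w i * g i := by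
  obtain ⟨i, hi, hwi⟩ : ∃ i ∈ s, 0 < w i := by
    simpa using Finset.exists_lt_of_sum_lt (f := fun _ => (0 : R)) (by simpa using hsum)
  exact Finset.sum_lt_sum (fun j hj => mul_le_mul_of_nonneg_left (hfg j hj).le (hw j hj))
    ⟨i, hi, mul_lt_mul_of_pos_left (hfg i hi) hwi⟩

theorem stmt_10_general (Lmax : ℕ)
    (C : ℕ → (ℕ → ℝ) → ℝ)
    (μsoc μstar : ℕ → ℝ)
    (hsoc0 : ∀ l, 0 ≤ μsoc l) (hsoc1 : ∑ l ∈ Finset.Icc 1 Lmax, μsoc l = 1)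
    (hstar0 : ∀ l, 0 ≤ μstar l) (hstar1 : ∑ l ∈ Finset.Icc 1 Lmax, μstar l = 1)
    -- μ*_soc is a social optimum
    (hsocOpt : ∀ ν : ℕ → ℝ, (∀ l, 0 ≤ ν l) → (∑ l ∈ Finset.Icc 1 Lmax, ν l = 1) →
      ∑ L ∈ Finset.Icc 1 Lmax, μsoc L * C L μsoc ≤ ∑ L ∈ Finset.Icc 1 Lmax, ν L * C L ν)
    -- μ* is a Nash equilibrium
    (hnash : ∀ ν : ℕ → ℝ, (∀ l, 0 ≤ ν l) → (∑ l ∈ Finset.Icc 1 Lmax, ν l = 1) →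
      ∑ L ∈ Finset.Icc 1 Lmax, μstar L * C L μstar ≤
        ∑ L ∈ Finset.Icc 1 Lmax, ν L * C L μstar)
    -- positive externality under strict stochastic dominance
    (hext : ((∀ l ∈ Finset.Icc 1 Lmax,
        ∑ j ∈ Finset.Icc l Lmax, μsoc j ≤ ∑ j ∈ Finset.Icc l Lmax, μstar j) ∧
      (∃ l ∈ Finset.Icc 1 Lmax,
        ∑ j ∈ Finset.Icc l Lmax, μsoc j < ∑ j ∈ Finset.Icc l Lmax, μstar j)) →
      ∀ L ∈ Finset.Icc 1 Lmax, C L μstar < C L μsoc) :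
    ¬ ((∀ l ∈ Finset.Icc 1 Lmax,
        ∑ j ∈ Finset.Icc l Lmax, μsoc j ≤ ∑ j ∈ Finset.Icc l Lmax, μstar j) ∧
      (∃ l ∈ Finset.Icc 1 Lmax,
        ∑ j ∈ Finset.Icc l Lmax, μsoc j < ∑ j ∈ Finset.Icc l Lmax, μstar j)) := by
  intro hdom
  have hcheaper : ∑ L ∈ Finset.Icc 1 Lmax, μsoc L * C L μstar <
      ∑ L ∈ Finset.Icc 1 Lmax, μsoc L * C L μsoc :=
    Finset.sum_mul_lt_sum_mul_of_sum_pos (fun l _ => hsoc0 l) (by rw [hsoc1]; exact one_pos)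
      (hext hdom)
  linarith [hsocOpt μstar hstar0 hstar1, hnash μsoc hsoc0 hsoc1]

/-- No Nash equilibrium μ* can strictly stochastically dominate a social optimum μ*_soc
in the mean field model. -/
theorem stmt_10 (Lmax : ℕ) (hL : 1 ≤ Lmax)
    (C : ℕ → (ℕ → ℝ) → ℝ)
    (μsoc μstar : ℕ → ℝ)
    (hsoc0 : ∀ l, 0 ≤ μsoc l) (hsoc1 : ∑ l ∈ Finset.Icc 1 Lmax, μsoc l = 1)
    (hstar0 : ∀ l, 0 ≤ μstar l) (hstar1 : ∑ l ∈ Finset.Icc 1 Lmax, μstar l = 1)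
    -- μ*_soc is a social optimum
    (hsocOpt : ∀ ν : ℕ → ℝ, (∀ l, 0 ≤ ν l) → (∑ l ∈ Finset.Icc 1 Lmax, ν l = 1) →
      ∑ L ∈ Finset.Icc 1 Lmax, μsoc L * C L μsoc ≤ ∑ L ∈ Finset.Icc 1 Lmax, ν L * C L ν)
    -- μ* is a Nash equilibrium
    (hnash : ∀ ν : ℕ → ℝ, (∀ l, 0 ≤ ν l) → (∑ l ∈ Finset.Icc 1 Lmax, ν l = 1) →
      ∑ L ∈ Finset.Icc 1 Lmax, μstar L * C L μstar ≤
        ∑ L ∈ Finset.Icc 1 Lmax, ν L * C L μstar)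
    -- positive externality under strict stochastic dominance
    (hext : ((∀ l ∈ Finset.Icc 1 Lmax,
        ∑ j ∈ Finset.Icc l Lmax, μsoc j ≤ ∑ j ∈ Finset.Icc l Lmax, μstar j) ∧
      (∃ l ∈ Finset.Icc 1 Lmax,
        ∑ j ∈ Finset.Icc l Lmax, μsoc j < ∑ j ∈ Finset.Icc l Lmax, μstar j)) →
      ∀ L ∈ Finset.Icc 1 Lmax, C L μstar < C L μsoc) :
    ¬ ((∀ l ∈ Finset.Icc 1 Lmax,
        ∑ j ∈ Finset.Icc l Lmax, μsoc j ≤ ∑ j ∈ Finset.Icc l Lmax, μstar j) ∧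
      (∃ l ∈ Finset.Icc 1 Lmax,
        ∑ j ∈ Finset.Icc l Lmax, μsoc j < ∑ j ∈ Finset.Icc l Lmax, μstar j)) :=
  stmt_10_general Lmax C μsoc μstar hsoc0 hsoc1 hstar0 hstar1 hsocOpt hnash hext
end

section
/- Stationary solution of the mean field equation: a sequence (r(k))_{k≥0} with r(0)=1, r(k) → 0, and satisfying the balance equations λ·(u_μ(r(k−1)) − u_μ(r(k))) = r(k) − r(k+1) for all k ≥ 1 must satisfy r(k) = λ·u_μ(r(k−1)) for all k ≥ 1. -/
/-! Summing the balance equations from `k` to infinity telescopes on both sides: since `r` and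
`u_μ ∘ r` both tend to `0` (`u_μ` is a polynomial without constant term), the sequences
`r (k + 1)` and `λ u_μ(r k)` have the same increments and the same limit, hence coincide. -/

open Filter Topology

theorem eq_of_tendsto_of_forall_succ_eq {X : Type*} [TopologicalSpace X] [T2Space X]
    {f : ℕ → X} {a : X} (hf : ∀ n, f (n + 1) = f n) (h : Tendsto f atTop (𝓝 a)) (n : ℕ) :
    f n = a := by
  have hconst : ∀ n, f n = f 0 := fun n => Nat.rec rfl (fun n ih => (hf n).trans ih) n
  have hlim : Tendsto f atTop (𝓝 (f 0)) := tendsto_const_nhds.congr fun n => (hconst n).symm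
  exact (hconst n).trans (tendsto_nhds_unique hlim h)

theorem eq_of_tendsto_of_sub_succ_eq {G : Type*} [AddCommGroup G] [TopologicalSpace G]
    [IsTopologicalAddGroup G] [T2Space G] {x y : ℕ → G} {a : G}
    (hx : Tendsto x atTop (𝓝 a)) (hy : Tendsto y atTop (𝓝 a))
    (hxy : ∀ n, x n - x (n + 1) = y n - y (n + 1)) (n : ℕ) : x n = y n := by
  have hdiff : Tendsto (fun n => x n - y n) atTop (𝓝 0) := sub_self a ▸ hx.sub hy
  have hstep : ∀ n, x (n + 1) - y (n + 1) = x n - y n := fun n => by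
    rw [sub_eq_sub_iff_sub_eq_sub, ← neg_sub, hxy, neg_sub]
  exact sub_eq_zero.mp (eq_of_tendsto_of_forall_succ_eq hstep hdiff n)

theorem Filter.Tendsto.sum_pow_mul_of_zero_notMem {R ι : Type*} [Semiring R] [TopologicalSpace R]
    [IsTopologicalSemiring R] {l : Filter ι} {s : Finset ℕ} (hs : 0 ∉ s) (c : ℕ → R)
    {r : ι → R} (hr : Tendsto r l (𝓝 0)) :
    Tendsto (fun k => ∑ n ∈ s, r k ^ n * c n) l (𝓝 0) := by
  have hzero : ∑ n ∈ s, (0 : R) ^ n * c n = 0 :=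
    Finset.sum_eq_zero fun n hn => by rw [zero_pow (ne_of_mem_of_not_mem hn hs), zero_mul]
  simpa only [hzero] using tendsto_finsetSum s fun n _ => (hr.pow n).mul_const (c n)

theorem stmt_16_general (lam : ℝ)
    (Lmax : ℕ)
    (μ : ℕ → ℝ)
    (r : ℕ → ℝ)
    (hlim : Filter.Tendsto r Filter.atTop (nhds 0))
    (hbal : ∀ k : ℕ,
      lam * ((∑ l ∈ Finset.Icc 1 Lmax, (r k) ^ l * μ l) -
        ∑ l ∈ Finset.Icc 1 Lmax, (r (k + 1)) ^ l * μ l) = r (k + 1) - r (k + 2)) :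
    ∀ k : ℕ, r (k + 1) = lam * ∑ l ∈ Finset.Icc 1 Lmax, (r k) ^ l * μ l := by
  have hu : Tendsto (fun k => lam * ∑ l ∈ Finset.Icc 1 Lmax, r k ^ l * μ l) atTop (𝓝 0) := by
    simpa using (hlim.sum_pow_mul_of_zero_notMem (by simp) μ).const_mul lam
  refine eq_of_tendsto_of_sub_succ_eq (hlim.comp (tendsto_add_atTop_nat 1)) hu fun n => ?_
  rw [← mul_sub]
  exact (hbal n).symm

/-- A stationary solution of the mean field balance equations
λ(u_μ(r(k−1)) − u_μ(r(k))) = r(k) − r(k+1) with r(0)=1, r(k)→0 and Σ r(k) < ∞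
satisfies r(k) = λ·u_μ(r(k−1)) for all k ≥ 1. -/
theorem stmt_16 (lam : ℝ) (hlam0 : 0 < lam) (hlam1 : lam < 1)
    (Lmax : ℕ) (hL : 1 ≤ Lmax)
    (μ : ℕ → ℝ) (hμ0 : ∀ l, 0 ≤ μ l) (hμ1 : ∑ l ∈ Finset.Icc 1 Lmax, μ l = 1)
    (r : ℕ → ℝ) (hr0 : r 0 = 1) (hr01 : ∀ k, 0 ≤ r k ∧ r k ≤ 1)
    (hlim : Filter.Tendsto r Filter.atTop (nhds 0))
    (hsum : Summable r)
    (hbal : ∀ k : ℕ,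
      lam * ((∑ l ∈ Finset.Icc 1 Lmax, (r k) ^ l * μ l) -
        ∑ l ∈ Finset.Icc 1 Lmax, (r (k + 1)) ^ l * μ l) = r (k + 1) - r (k + 2)) :
    ∀ k : ℕ, r (k + 1) = lam * ∑ l ∈ Finset.Icc 1 Lmax, (r k) ^ l * μ l :=
  stmt_16_general lam Lmax μ r hlim hbal
end
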